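/- For every sequence x ∈ {0,1}^∞ there exists a stationary measure μ_x on {0,1}^∞ such that d(δ_x, μ_x) = 0, where d(μ,ρ) = liminf_n (1/n) E_μ[log(μ(x_{1..n})/ρ(x_{1..n}))]. Specifically, μ_x(x_{1..n}) ≥ π(1)/(n+1)^2 for all n, where π(1) > 0 is a constant independent of n. -/

import Mathlib

/-- A time-series distribution on `{0,1}^∞`, given by its cylinder probabilities. -/
structure TSD where
  p : List Bool → ℝ
  nonneg : ∀ w, 0 ≤ p w
  empty_one : p [] = 1
  additive : ∀ w, p w = p (w ++ [false]) + p (w ++ [true])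

/-- Stationarity of a time-series distribution, expressed on cylinder
probabilities: the shifted distribution coincides with the original one. -/
def StationaryTSD (μ : TSD) : Prop :=
  ∀ w : List Bool, μ.p w = μ.p (false :: w) + μ.p (true :: w)

/-- The prefix `x_1 … x_n` of an infinite binary sequence. -/
def pref (x : ℕ → Bool) (n : ℕ) : List Bool := (List.range n).map x

/-- `−log₂ t`, valued in the extended reals (so that `−log₂ 0 = ∞`). -/
noncomputable def negLog2 (t : ℝ) : EReal :=
  if t ≤ 0 then ⊤ else ((-Real.logb 2 t : ℝ) : EReal)

/-!
Instead of the renewal Markov chain we take `μ_x = ∑ₘ wₘ νₘ`, where `νₘ` is the uniform measure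
on the shift-orbit of the periodic sequence with period word `x₀ ⋯ xₘ` and `wₘ = 1/((m+1)(m+2))`.
Each `νₘ` is stationary because the shift permutes the orbit, hence so is the mixture. For
`m + 1 ≥ n` the periodic sequence itself starts with `x₀ ⋯ x_{n-1}`, so `νₘ(x_{1..n}) ≥ 1/(m+1)`
and `μ_x(x_{1..n}) ≥ ∑_{m ≥ n} 1/((m+1)²(m+2)) ≥ 1/(2(n+1)²)`. Consequently
`-(1/n) log₂ μ_x(x_{1..n}) = O(log n / n) → 0`.
-/

open Filter Finset Topology

lemma length_pref (z : ℕ → Bool) (n : ℕ) : (pref z n).length = n := by simp [pref]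

lemma pref_succ (z : ℕ → Bool) (n : ℕ) : pref z (n + 1) = pref z n ++ [z n] := by
  simp [pref, List.range_succ]

lemma pref_succ_eq_cons (z : ℕ → Bool) (n : ℕ) :
    pref z (n + 1) = z 0 :: pref (fun k => z (k + 1)) n := by
  simp [pref, List.range_succ_eq_map]

lemma pref_congr {y z : ℕ → Bool} {n : ℕ} (h : ∀ k < n, y k = z k) : pref y n = pref z n :=
  List.map_congr_left fun k hk => h k (List.mem_range.1 hk)

lemma hasSum_sub_succ_of_antitone {g : ℕ → ℝ} (hg : Antitone g) (h0 : Tendsto g atTop (𝓝 0)) :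
    HasSum (fun n => g n - g (n + 1)) (g 0) := by
  refine (hasSum_iff_tendsto_nat_of_nonneg (fun n => sub_nonneg.2 (hg n.le_succ)) _).2 ?_
  simp_rw [Finset.sum_range_sub']
  simpa using (tendsto_const_nhds (x := g 0)).sub h0

lemma sum_range_succ_comp_eq_of_eq {M : Type*} [AddCancelCommMonoid M] (f : ℕ → M) {P : ℕ}
    (h : f P = f 0) : ∑ i ∈ range P, f (i + 1) = ∑ i ∈ range P, f i :=
  add_right_cancel ((sum_range_succ' f P).symm.trans (h ▸ sum_range_succ f P))

namespace TSD

lemma p_append_le (μ : TSD) (w : List Bool) (b : Bool) : μ.p (w ++ [b]) ≤ μ.p w := by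
  have := μ.additive w
  have := μ.nonneg (w ++ [false])
  have := μ.nonneg (w ++ [true])
  cases b <;> linarith

lemma p_le_one (μ : TSD) (w : List Bool) : μ.p w ≤ 1 := by
  induction w using List.reverseRecOn with
  | nil => exact μ.empty_one.le
  | append_singleton w b ih => exact (μ.p_append_le w b).trans ih

def dirac (z : ℕ → Bool) : TSD where
  p w := if pref z w.length = w then 1 else 0
  nonneg w := by positivity
  empty_one := by simp [pref]
  additive w := by
    simp only [List.length_append, List.length_singleton, pref_succ]
    by_cases h : pref z w.length = w <;> cases z w.length <;> simp [h]

lemma dirac_p_cons (z : ℕ → Bool) (w : List Bool) :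
    (dirac z).p (false :: w) + (dirac z).p (true :: w) = (dirac fun k => z (k + 1)).p w := by
  simp only [dirac, List.length_cons, pref_succ_eq_cons, List.cons.injEq]
  cases z 0 <;> simp

lemma summable_mul_p (ν : ℕ → TSD) {a : ℕ → ℝ} (ha : ∀ m, 0 ≤ a m) (hs : Summable a)
    (w : List Bool) : Summable fun m => a m * (ν m).p w :=
  .of_nonneg_of_le (fun m => mul_nonneg (ha m) ((ν m).nonneg w))
    (fun m => mul_le_of_le_one_right (ha m) ((ν m).p_le_one w)) hs

noncomputable def mixture (ν : ℕ → TSD) (a : ℕ → ℝ) (ha : ∀ m, 0 ≤ a m) (h1 : HasSum a 1) :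
    TSD where
  p w := ∑' m, a m * (ν m).p w
  nonneg w := tsum_nonneg fun m => mul_nonneg (ha m) ((ν m).nonneg w)
  empty_one := by simp [TSD.empty_one, h1.tsum_eq]
  additive w := by
    rw [← (summable_mul_p ν ha h1.summable _).tsum_add (summable_mul_p ν ha h1.summable _)]
    simp only [← mul_add, ← TSD.additive]

lemma stationaryTSD_mixture {ν : ℕ → TSD} {a : ℕ → ℝ} (ha : ∀ m, 0 ≤ a m) (h1 : HasSum a 1)
    (hν : ∀ m, StationaryTSD (ν m)) : StationaryTSD (mixture ν a ha h1) := by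
  intro w
  simp only [mixture]
  rw [← (summable_mul_p ν ha h1.summable _).tsum_add (summable_mul_p ν ha h1.summable _)]
  simp only [← mul_add, ← hν _ w]

noncomputable def periodicOrbit (y : ℕ → Bool) (P : ℕ) (hP : P ≠ 0) : TSD where
  p w := (∑ i ∈ range P, (dirac fun k => y (i + k)).p w) / P
  nonneg w := div_nonneg (sum_nonneg fun i _ => (dirac _).nonneg w) P.cast_nonneg
  empty_one := by simp [TSD.empty_one, hP]
  additive w := by
    rw [← add_div, ← Finset.sum_add_distrib]
    simp only [← TSD.additive]

lemma stationaryTSD_periodicOrbit {y : ℕ → Bool} {P : ℕ} (hP : P ≠ 0)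
    (hy : Function.Periodic y P) : StationaryTSD (periodicOrbit y P hP) := by
  intro w
  simp only [periodicOrbit]
  rw [← add_div, ← Finset.sum_add_distrib]
  simp only [dirac_p_cons]
  congr 1
  have hy' : ∀ k, y (k + P) = y k := hy
  refine (sum_range_succ_comp_eq_of_eq (P := P) (fun i => (dirac fun k => y (i + k)).p w)
    (by simp only [add_comm P, hy', zero_add])).symm.trans ?_
  simp only [add_right_comm _ 1, add_assoc]

lemma dirac_p_div_le_periodicOrbit (y : ℕ → Bool) {P : ℕ} (hP : P ≠ 0) (w : List Bool) :
    (dirac y).p w / P ≤ (periodicOrbit y P hP).p w := by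
  refine div_le_div_of_nonneg_right ?_ P.cast_nonneg
  simpa using Finset.single_le_sum (fun i _ => (dirac fun k => y (i + k)).nonneg w)
    (Finset.mem_range.2 (Nat.pos_of_ne_zero hP))

end TSD

def periodicExtension (x : ℕ → Bool) (P : ℕ) (k : ℕ) : Bool := x (k % P)

lemma periodic_periodicExtension (x : ℕ → Bool) (P : ℕ) :
    Function.Periodic (periodicExtension x P) P := fun k => by
  simp [periodicExtension]

lemma pref_periodicExtension (x : ℕ → Bool) {P n : ℕ} (h : n ≤ P) :
    pref (periodicExtension x P) n = pref x n :=
  pref_congr fun k hk => congrArg x (Nat.mod_eq_of_lt (by omega))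

lemma inv_le_periodicOrbit_periodicExtension_pref (x : ℕ → Bool) {P n : ℕ} (hP : P ≠ 0)
    (h : n ≤ P) : (P : ℝ)⁻¹ ≤ (TSD.periodicOrbit (periodicExtension x P) P hP).p (pref x n) := by
  simpa [TSD.dirac, length_pref, pref_periodicExtension x h] using
    TSD.dirac_p_div_le_periodicOrbit (periodicExtension x P) hP (pref x n)

noncomputable def orbitWeight (m : ℕ) : ℝ := ((m : ℝ) + 1)⁻¹ - ((m : ℝ) + 2)⁻¹

lemma orbitWeight_nonneg (m : ℕ) : 0 ≤ orbitWeight m :=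
  sub_nonneg.2 (by gcongr; norm_num)

lemma hasSum_orbitWeight : HasSum orbitWeight 1 := by
  have hanti : Antitone fun m : ℕ => ((m : ℝ) + 1)⁻¹ := fun a b hab => by
    dsimp only
    gcongr
  have hlim : Tendsto (fun m : ℕ => ((m : ℝ) + 1)⁻¹) atTop (𝓝 0) := by
    simpa using tendsto_one_div_add_atTop_nhds_zero_nat (𝕜 := ℝ)
  have := hasSum_sub_succ_of_antitone hanti hlim
  simp only [Nat.cast_zero, Nat.cast_succ, zero_add, inv_one, add_assoc, one_add_one_eq_two] at this
  exact this

noncomputable def orbitMixture (x : ℕ → Bool) : TSD :=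
  TSD.mixture (fun m => TSD.periodicOrbit (periodicExtension x (m + 1)) (m + 1) m.succ_ne_zero)
    orbitWeight orbitWeight_nonneg hasSum_orbitWeight

lemma stationaryTSD_orbitMixture (x : ℕ → Bool) : StationaryTSD (orbitMixture x) :=
  TSD.stationaryTSD_mixture _ _ fun m =>
    TSD.stationaryTSD_periodicOrbit _ (periodic_periodicExtension x (m + 1))

lemma half_inv_sq_sub_le_orbitWeight_mul (m : ℕ) :
    (1 / ((m : ℝ) + 1)) ^ 2 / 2 - (1 / (((m + 1 : ℕ) : ℝ) + 1)) ^ 2 / 2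
      ≤ orbitWeight m * ((m : ℝ) + 1)⁻¹ := by
  have key : orbitWeight m * ((m : ℝ) + 1)⁻¹
      - ((1 / ((m : ℝ) + 1)) ^ 2 / 2 - (1 / (((m + 1 : ℕ) : ℝ) + 1)) ^ 2 / 2)
      = (2 * ((m : ℝ) + 1) ^ 2 * ((m : ℝ) + 2) ^ 2)⁻¹ := by
    rw [orbitWeight]
    push_cast
    field_simp
    ring
  have : 0 ≤ (2 * ((m : ℝ) + 1) ^ 2 * ((m : ℝ) + 2) ^ 2)⁻¹ := by positivity
  linarith

lemma half_div_sq_le_orbitMixture_pref (x : ℕ → Bool) (n : ℕ) :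
    1 / 2 / ((n : ℝ) + 1) ^ 2 ≤ (orbitMixture x).p (pref x n) := by
  -- the tail `m ≥ n` of the mixture dominates the telescoping series of `h m = 1/(2(m+1)²)`
  set h : ℕ → ℝ := fun j => (1 / ((j : ℝ) + 1)) ^ 2 / 2
  have hanti : Antitone fun k => h (k + n) := fun a b hab => by
    dsimp only [h]
    gcongr
  have hlim : Tendsto (fun k => h (k + n)) atTop (𝓝 0) := by
    refine (tendsto_add_atTop_iff_nat n).2 ?_
    simpa [h] using ((tendsto_one_div_add_atTop_nhds_zero_nat (𝕜 := ℝ)).pow 2).div_const 2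
  have htel := hasSum_sub_succ_of_antitone hanti hlim
  calc 1 / 2 / ((n : ℝ) + 1) ^ 2 = h n := by simp only [h]; field_simp
    _ = ∑' k, (h (k + n) - h (k + 1 + n)) := by simpa using htel.tsum_eq.symm
    _ ≤ (orbitMixture x).p (pref x n) := by
      refine htel.summable.tsum_le_tsum_of_inj (· + n) (add_left_injective n)
        (fun m _ => mul_nonneg (orbitWeight_nonneg m) (TSD.nonneg _ _)) (fun k => ?_)
        (TSD.summable_mul_p _ orbitWeight_nonneg hasSum_orbitWeight.summable _)
      have hν := inv_le_periodicOrbit_periodicExtension_pref x (k + n).succ_ne_zero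
        (n := n) (by omega)
      rw [Nat.cast_succ] at hν
      calc h (k + n) - h (k + 1 + n) ≤ orbitWeight (k + n) * (((k + n : ℕ) : ℝ) + 1)⁻¹ := by
            simpa only [h, Nat.add_right_comm k 1 n] using
              half_inv_sq_sub_le_orbitWeight_mul (k + n)
        _ ≤ _ := mul_le_mul_of_nonneg_left hν (orbitWeight_nonneg _)

lemma tendsto_logb_add_one_div_nat (b : ℝ) :
    Tendsto (fun n : ℕ => Real.logb b ((n : ℝ) + 1) / n) atTop (𝓝 0) := by
  simpa [Function.comp_def] using
    (Real.tendsto_pow_logb_div_mul_add_atTop (b := b) 1 (-1) 1 one_ne_zero).comp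
      (tendsto_atTop_add_const_right _ 1 tendsto_natCast_atTop_atTop)

lemma liminf_inv_mul_negLog2_eq_zero {p : ℕ → ℝ} {c : ℝ} (hc : 0 < c)
    (hlow : ∀ n : ℕ, c / ((n : ℝ) + 1) ^ 2 ≤ p n) (hle : ∀ n, p n ≤ 1) :
    liminf (fun n : ℕ => (((n : ℝ)⁻¹ : ℝ) : EReal) * negLog2 (p n)) atTop = 0 := by
  have hpos (n : ℕ) : 0 < p n := lt_of_lt_of_le (by positivity) (hlow n)
  have hupper (n : ℕ) : -Real.logb 2 (p n) ≤ -Real.logb 2 c + 2 * Real.logb 2 ((n : ℝ) + 1) := by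
    have := Real.logb_le_logb_of_le one_lt_two (by positivity) (hlow n)
    rw [Real.logb_div hc.ne' (by positivity), Real.logb_pow] at this
    push_cast at this
    linarith
  have hbound : Tendsto (fun n : ℕ => (n : ℝ)⁻¹ * -Real.logb 2 c
      + 2 * (Real.logb 2 ((n : ℝ) + 1) / n)) atTop (𝓝 0) := by
    simpa using (tendsto_inv_atTop_nhds_zero_nat.mul_const (-Real.logb 2 c)).add
      ((tendsto_logb_add_one_div_nat 2).const_mul 2)
  have hr : Tendsto (fun n : ℕ => (n : ℝ)⁻¹ * -Real.logb 2 (p n)) atTop (𝓝 0) := by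
    refine squeeze_zero (fun n => mul_nonneg (by positivity)
      (neg_nonneg.2 (Real.logb_nonpos one_lt_two (hpos n).le (hle n)))) (fun n => ?_) hbound
    have := mul_le_mul_of_nonneg_left (hupper n) (inv_nonneg.2 (n.cast_nonneg : (0 : ℝ) ≤ n))
    simp only [mul_add, div_eq_mul_inv] at this ⊢
    linarith
  have heq (n : ℕ) : (((n : ℝ)⁻¹ : ℝ) : EReal) * negLog2 (p n)
      = (((n : ℝ)⁻¹ * -Real.logb 2 (p n) : ℝ) : EReal) := by
    rw [negLog2, if_neg (hpos n).not_ge, EReal.coe_mul]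
  simp only [heq]
  simpa using (EReal.tendsto_coe.2 hr).liminf_eq

/-- for every `x ∈ {0,1}^∞` there is a stationary measure `μ_x`
with `μ_x(x_{1..n}) ≥ π(1)/(n+1)^2` for a constant `π(1) > 0`, and hence
`d(δ_x, μ_x) = liminf (1/n)(−log₂ μ_x(x_{1..n})) = 0`. -/
theorem stmt11 (x : ℕ → Bool) :
    ∃ μ : TSD, StationaryTSD μ ∧
      (∃ c : ℝ, 0 < c ∧ ∀ n : ℕ, c / ((n : ℝ) + 1)^2 ≤ μ.p (pref x n)) ∧
      Filter.liminf
        (fun n : ℕ => ((((n : ℝ))⁻¹ : ℝ) : EReal) * negLog2 (μ.p (pref x n)))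
        Filter.atTop = 0 :=
  ⟨orbitMixture x, stationaryTSD_orbitMixture x,
    ⟨1 / 2, by norm_num, half_div_sq_le_orbitMixture_pref x⟩,
    liminf_inv_mul_negLog2_eq_zero (by norm_num) (half_div_sq_le_orbitMixture_pref x)
      fun n => (orbitMixture x).p_le_one _⟩
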